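/- Suppose the colors of the colored graph are partitioned, i.e. for every pair of vertices i, j ∈ S either C(i) = C(j) or C(i) ∩ C(j) = ∅. Then the process law p of the colored edge reinforced random walk started at x0 is Markov exchangeable. -/

import Mathlib

/-!
STATEMENT 13: a colored edge reinforced random walk with partitioned colors is
Markov exchangeable.

-/

open scoped Classical

/-- A colored graph: directed edges `E ⊆ S × S`, a color for each edge, positive
edge weights `β` and positive color weights `α`. -/
structure ColoredGraph (S C : Type*) where
  E : Set (S × S)
  col : S × S → C
  β : S × S → ℝ
  α : C → ℝ
  β_pos : ∀ e ∈ E, 0 < β e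
  α_pos : ∀ c, 0 < α c

namespace ColoredGraph

variable {S C : Type*}

/-- `C(i)`: the set of colors of the edges starting at `i`. -/
def Ci (G : ColoredGraph S C) (i : S) : Set C :=
  {c | ∃ j, (i, j) ∈ G.E ∧ G.col (i, j) = c}

/-- `α_{C(i)}`: the total weight of the colors of the edges starting at `i`. -/
noncomputable def alphaCi (G : ColoredGraph S C) (i : S) : ℝ :=
  ∑' c : G.Ci i, G.α c

/-- `β_{i,E_c}`: the total weight of the edges of color `c` starting at `i`. -/
noncomputable def betaFrom (G : ColoredGraph S C) (i : S) (c : C) : ℝ :=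
  ∑' j : {j : S // (i, j) ∈ G.E ∧ G.col (i, j) = c}, G.β (i, (j : S))

/-- `T_{i,j}(z)`: the number of transitions from `i` to `j` in the string `z`. -/
noncomputable def transCount (G : ColoredGraph S C) (z : List S) (i j : S) : ℕ :=
  (z.zip z.tail).countP (fun q => decide (q = (i, j)))

/-- `T_{E_c}(z)`: the number of transitions of `z` along edges of color `c`. -/
noncomputable def tEdgeColor (G : ColoredGraph S C) (z : List S) (c : C) : ℕ :=
  (z.zip z.tail).countP (fun e => decide (e ∈ G.E ∧ G.col e = c))

/-- `T_{C(i)}(z)`: the number of transitions of `z` along edges whose color is in `C(i)`. -/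
noncomputable def tColorOf (G : ColoredGraph S C) (z : List S) (i : S) : ℕ :=
  (z.zip z.tail).countP (fun e => decide (e ∈ G.E ∧ G.col e ∈ G.Ci i))

/-- `T_{i,E_c}(z)`: the number of transitions of `z` from `i` along edges of color `c`. -/
noncomputable def tFromColor (G : ColoredGraph S C) (z : List S) (i : S) (c : C) : ℕ :=
  (z.zip z.tail).countP (fun e => decide (e.1 = i ∧ e ∈ G.E ∧ G.col e = c))

/-- One-step predictive probability of the colored edge reinforced random walk:
the past path is `z` (starting at `x0` and ending at the current state), the
next state is `y`. -/
noncomputable def step (G : ColoredGraph S C) (z : List S) (y : S) : ℝ :=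
  match z.getLast? with
  | none => 0
  | some i =>
    if (i, y) ∈ G.E then
      ((G.α (G.col (i, y)) + (G.tEdgeColor z (G.col (i, y)) : ℝ)) /
          (G.alphaCi i + (G.tColorOf z i : ℝ))) *
        ((G.β (i, y) + (G.transCount z i y : ℝ)) /
          (G.betaFrom i (G.col (i, y)) + (G.tFromColor z i (G.col (i, y)) : ℝ)))
    else 0

/-- The probability of appending the string `x` to the past path `z`. -/
noncomputable def lawFrom (G : ColoredGraph S C) : List S → List S → ℝ
  | _, [] => 1
  | z, y :: rest => G.step z y * G.lawFrom (z ++ [y]) rest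

/-- The process law of the colored edge reinforced random walk started at `x0`. -/
noncomputable def law (G : ColoredGraph S C) (x0 : S) (x : List S) : ℝ :=
  G.lawFrom [x0] x

/-- The term `α_{C(j)} + T_{C(j)}(x0, base, y_1, …, y_t)` where `j = y_t` is the
last element of the prefix of `y` of length `t ≥ 1`. -/
noncomputable def colorTerm (G : ColoredGraph S C) (x0 : S) (base y : List S) (t : ℕ) : ℝ :=
  G.alphaCi ((x0 :: (base ++ y.take t)).getLast (List.cons_ne_nil _ _)) +
    (G.tColorOf (x0 :: (base ++ y.take t))
      ((x0 :: (base ++ y.take t)).getLast (List.cons_ne_nil _ _)) : ℝ)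

end ColoredGraph

/-- Two finite strings are equivalent if they have the same first element and the
same transition counts between any two states. -/
def StringEquiv {S : Type*} (z z' : List S) : Prop :=
  z.head? = z'.head? ∧
    ∀ i j : S, (z.zip z.tail).countP (fun q => decide (q = (i, j))) =
      (z'.zip z'.tail).countP (fun q => decide (q = (i, j)))

/-!
Under the partition hypothesis, a transition `(u, v) ∈ E` has a color in `C(i)` exactly when
`C(u) = C(i)`, so `T_{C(i)}` counts transitions by the color class of their source. Each of the
four factors of a step is then the current weight of a label in a Pólya urn: the urns of colors,
of color classes, of edges, and of (source, color) pairs. The law of a path is a ratio of four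
Pólya urn products, and a Pólya urn product does not depend on the order of the draws. Two strings
with the same start and the same transition counts have transition lists that are permutations of
each other, hence the same law.
-/

namespace List

variable {α : Type*}

theorem consecutivePairs_cons_cons (a b : α) (l : List α) :
    (a :: b :: l).consecutivePairs = (a, b) :: (b :: l).consecutivePairs :=
  rfl

theorem consecutivePairs_append_singleton {l : List α} {i : α} (hl : l.getLast? = some i)
    (y : α) : (l ++ [y]).consecutivePairs = l.consecutivePairs ++ [(i, y)] := by
  induction l with
  | nil => simp at hl
  | cons a t ih =>
    cases t with
    | nil =>
      obtain rfl : a = i := by simpa using hl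
      rfl
    | cons b t =>
      have ih := ih (by simpa [getLast?_cons_cons] using hl)
      simpa [consecutivePairs] using ih

end List

open List

section PolyaUrn

variable {Λ : Type*} [BEq Λ]

/-- The probability weight of drawing the labels `l` in turn from a Pólya urn with initial
weights `w` that has already seen the draws `h`: every draw adds `1` to the weight of its label. -/
noncomputable def polyaProd (w : Λ → ℝ) : List Λ → List Λ → ℝ
  | _, [] => 1
  | h, a :: l => (w a + h.count a) * polyaProd w (h ++ [a]) l

theorem polyaProd_perm_history (w : Λ → ℝ) {h h' : List Λ} (hh : h.Perm h') (l : List Λ) :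
    polyaProd w h l = polyaProd w h' l := by
  induction l generalizing h h' with
  | nil => rfl
  | cons a l ih => simp only [polyaProd, hh.count_eq a, ih (hh.append_right [a])]

theorem polyaProd_perm [LawfulBEq Λ] (w : Λ → ℝ) {l l' : List Λ} (hl : l.Perm l')
    (h : List Λ) :
    polyaProd w h l = polyaProd w h l' := by
  induction hl generalizing h with
  | nil => rfl
  | cons a _ ih => simp only [polyaProd, ih]
  | swap a b l =>
    have hh : (h ++ [b] ++ [a]).Perm (h ++ [a] ++ [b]) := by
      simpa only [append_assoc, singleton_append] using (Perm.swap a b []).append_left h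
    simp only [polyaProd, polyaProd_perm_history w hh, count_append, count_singleton, beq_iff_eq]
    by_cases hab : a = b
    · subst hab; ring
    · simp only [hab, Ne.symm hab, if_false, add_zero]; ring
  | trans _ _ ih₁ ih₂ => rw [ih₁, ih₂]

end PolyaUrn

namespace ColoredGraph

variable {S C : Type*} (G : ColoredGraph S C)

def ColorsPartitioned : Prop :=
  ∀ i j : S, G.Ci i = G.Ci j ∨ G.Ci i ∩ G.Ci j = ∅

def IsPath (z : List S) : Prop :=
  ∀ e ∈ z.consecutivePairs, e ∈ G.E

def colorClass (e : S × S) : Set C := G.Ci e.1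

def sourceColor (e : S × S) : S × C := (e.1, G.col e)

noncomputable def stepWeight (h : List (S × S)) (e : S × S) : ℝ :=
  (G.α (G.col e) + (h.map G.col).count (G.col e)) /
      (G.alphaCi e.1 + (h.map G.colorClass).count (G.colorClass e)) *
    ((G.β e + h.count e) /
      (G.betaFrom e.1 (G.col e) + (h.map G.sourceColor).count (G.sourceColor e)))

noncomputable def pathWeight (h l : List (S × S)) : ℝ :=
  polyaProd G.α (h.map G.col) (l.map G.col) /
      polyaProd (fun A : Set C => ∑' c : A, G.α c) (h.map G.colorClass) (l.map G.colorClass) *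
    (polyaProd G.β h l /
      polyaProd (fun q : S × C => G.betaFrom q.1 q.2) (h.map G.sourceColor)
        (l.map G.sourceColor))

theorem isPath_singleton (i : S) : G.IsPath [i] := by
  simp [IsPath, consecutivePairs]

theorem pathWeight_nil (h : List (S × S)) : G.pathWeight h [] = 1 := by
  simp [pathWeight, polyaProd]

theorem pathWeight_cons (h : List (S × S)) (e : S × S) (l : List (S × S)) :
    G.pathWeight h (e :: l) = G.stepWeight h e * G.pathWeight (h ++ [e]) l := by
  simp only [pathWeight, stepWeight, polyaProd, map_cons, map_append, map_nil, alphaCi,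
    colorClass, sourceColor, mul_div_mul_comm]
  ring

theorem pathWeight_perm (h : List (S × S)) {l l' : List (S × S)} (hl : l.Perm l') :
    G.pathWeight h l = G.pathWeight h l' := by
  simp only [pathWeight, polyaProd_perm _ hl, polyaProd_perm _ (hl.map _)]

variable {G}

theorem col_mem_Ci {e : S × S} (he : e ∈ G.E) : G.col e ∈ G.Ci e.1 :=
  ⟨e.2, he, rfl⟩

theorem col_mem_Ci_iff (hpart : G.ColorsPartitioned)
    {e : S × S} (he : e ∈ G.E) (i : S) : G.col e ∈ G.Ci i ↔ G.colorClass e = G.Ci i := by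
  refine ⟨fun hi => (hpart e.1 i).resolve_right fun hdisj => ?_, fun h => h ▸ col_mem_Ci he⟩
  exact Set.eq_empty_iff_forall_notMem.mp hdisj _ ⟨col_mem_Ci he, hi⟩

section Counts

variable {z : List S}

theorem transCount_eq_count (i j : S) :
    G.transCount z i j = z.consecutivePairs.count (i, j) := by
  rw [count_eq_countP]
  exact countP_congr fun e _ => by simp

theorem tEdgeColor_eq_count (hE : G.IsPath z) (c : C) :
    G.tEdgeColor z c = (z.consecutivePairs.map G.col).count c := by
  rw [count_eq_countP, countP_map]
  exact countP_congr fun e he => by simp [hE e he]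

theorem tFromColor_eq_count (hE : G.IsPath z) (i : S) (c : C) :
    G.tFromColor z i c = (z.consecutivePairs.map G.sourceColor).count (i, c) := by
  rw [count_eq_countP, countP_map]
  exact countP_congr fun e he => by simp [sourceColor, hE e he]

theorem tColorOf_eq_count (hpart : G.ColorsPartitioned)
    (hE : G.IsPath z) (i : S) :
    G.tColorOf z i = (z.consecutivePairs.map G.colorClass).count (G.Ci i) := by
  rw [count_eq_countP, countP_map]
  exact countP_congr fun e he => by simp [hE e he, col_mem_Ci_iff hpart (hE e he)]

end Counts

theorem step_eq_stepWeight (hpart : G.ColorsPartitioned)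
    {z : List S} {i : S} (hz : z.getLast? = some i) (hE : G.IsPath z)
    {y : S} (hy : (i, y) ∈ G.E) : G.step z y = G.stepWeight z.consecutivePairs (i, y) := by
  simp only [step, hz, if_pos hy, stepWeight, tEdgeColor_eq_count hE, tColorOf_eq_count hpart hE,
    transCount_eq_count, tFromColor_eq_count hE]
  rfl

theorem lawFrom_eq_pathWeight (hpart : G.ColorsPartitioned)
    (x : List S) {z : List S} {i : S} (hz : z.getLast? = some i)
    (hEz : G.IsPath z) (hEx : G.IsPath (i :: x)) :
    G.lawFrom z x = G.pathWeight z.consecutivePairs (i :: x).consecutivePairs := by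
  induction x generalizing z i with
  | nil => exact (G.pathWeight_nil _).symm
  | cons y x ih =>
    rw [IsPath, consecutivePairs_cons_cons, forall_mem_cons] at hEx
    have hzy := consecutivePairs_append_singleton hz y
    have hEzy : G.IsPath (z ++ [y]) := by
      rw [IsPath, hzy, forall_mem_append, forall_mem_singleton]
      exact ⟨hEz, hEx.1⟩
    rw [lawFrom, consecutivePairs_cons_cons, pathWeight_cons, step_eq_stepWeight hpart hz hEz hEx.1,
      ih (by simp) hEzy hEx.2, hzy]

theorem lawFrom_eq_zero {x z : List S} {i : S} (hz : z.getLast? = some i)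
    (hx : ¬G.IsPath (i :: x)) : G.lawFrom z x = 0 := by
  induction x generalizing z i with
  | nil => exact absurd (isPath_singleton G i) hx
  | cons y x ih =>
    rw [IsPath, consecutivePairs_cons_cons, forall_mem_cons, not_and_or] at hx
    rcases hx with hy | hx
    · simp [lawFrom, step, hz, hy]
    · rw [lawFrom, ih (by simp) hx, mul_zero]

end ColoredGraph

theorem cerw_partitioned_markovExchangeable_general {S C : Type*}
    (G : ColoredGraph S C) (x0 : S)
    (hpart : ∀ i j : S, G.Ci i = G.Ci j ∨ G.Ci i ∩ G.Ci j = ∅) :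
    ∀ x x' : List S, StringEquiv (x0 :: x) (x0 :: x') → G.law x0 x = G.law x0 x' := by
  rintro x x' ⟨-, hcount⟩
  have hperm : (x0 :: x).consecutivePairs.Perm (x0 :: x').consecutivePairs :=
    perm_iff_count.mpr fun ⟨i, j⟩ =>
      (G.transCount_eq_count i j).symm.trans ((hcount i j).trans (G.transCount_eq_count i j))
  have hpath : G.IsPath (x0 :: x) ↔ G.IsPath (x0 :: x') :=
    forall_congr' fun e => imp_congr_left hperm.mem_iff
  have hstart : [x0].getLast? = some x0 := rfl
  rw [ColoredGraph.law, ColoredGraph.law]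
  by_cases hE : G.IsPath (x0 :: x)
  · rw [G.lawFrom_eq_pathWeight hpart x hstart (G.isPath_singleton x0) hE,
      G.lawFrom_eq_pathWeight hpart x' hstart (G.isPath_singleton x0) (hpath.mp hE),
      G.pathWeight_perm _ hperm]
  · rw [G.lawFrom_eq_zero hstart hE, G.lawFrom_eq_zero hstart (mt hpath.mpr hE)]

theorem cerw_partitioned_markovExchangeable {S C : Type*} [Countable S] [Countable C]
    (G : ColoredGraph S C) (x0 : S)
    (hsumα : ∀ i : S, Summable (fun c : G.Ci i => G.α c))
    (hsumβ : ∀ (i : S) (c : C),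
      Summable (fun j : {j : S // (i, j) ∈ G.E ∧ G.col (i, j) = c} => G.β (i, (j : S))))
    (hpart : ∀ i j : S, G.Ci i = G.Ci j ∨ G.Ci i ∩ G.Ci j = ∅) :
    ∀ x x' : List S, StringEquiv (x0 :: x) (x0 :: x') → G.law x0 x = G.law x0 x' :=
  cerw_partitioned_markovExchangeable_general G x0 hpart
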